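/- arXiv:1712.09766 — 12 statements merged into one kernel-verified Lean document; each statement's English description precedes it below -/
import Mathlib

section
/- In the m-dimensional torus 𝕋^m = (Fin m → AddCircle (1:ℝ)) equipped with its product (sup) metric, the set of exponentially Liouville elements — i.e. the set of θ ∈ 𝕋^m such that for every real c > 0 there exists a positive integer k with dist(k • θ, 0) < exp(−c·k) — is residual in 𝕋^m (it contains a countable intersection of dense open sets). -/
open Filter Metric Real Set

lemma torsion_dense (m : ℕ) :
    Dense {θ : Fin m → AddCircle (1 : ℝ) | ∃ n : ℕ, 0 < n ∧ n • θ = 0} := by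
  rw [Metric.dense_iff]
  intro x ε hε
  obtain ⟨n, hn⟩ := exists_nat_gt (1 / ε)
  have hn0 : 0 < (n : ℝ) := lt_trans (by positivity) hn
  choose r hr using fun i => QuotientAddGroup.mk_surjective (x i)
  refine ⟨fun i => ((⌊r i * n⌋ / n : ℝ) : AddCircle (1 : ℝ)), ?_, ?_⟩
  · rw [mem_ball, dist_pi_lt_iff hε]
    intro i
    have h1 : dist ((⌊r i * n⌋ / n : ℝ) : AddCircle (1 : ℝ)) (x i)
        ≤ |(⌊r i * n⌋ / n : ℝ) - r i| := by
      rw [← hr i, dist_eq_norm, ← QuotientAddGroup.mk_sub]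
      exact QuotientAddGroup.norm_mk_le_norm.trans_eq (Real.norm_eq_abs _)
    refine lt_of_le_of_lt h1 ?_
    have h2 : |(⌊r i * n⌋ / n : ℝ) - r i| < 1 / n := by
      rw [abs_sub_comm, abs_of_nonneg, sub_lt_iff_lt_add]
      · rw [← add_div, lt_div_iff₀ hn0]
        rw [add_comm]; exact_mod_cast Int.lt_floor_add_one (r i * n)
      · rw [sub_nonneg, div_le_iff₀ hn0]
        exact Int.floor_le _
    refine h2.trans ?_
    rw [div_lt_iff₀ hn0]
    have := (div_lt_iff₀ hε).mp hn
    nlinarith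
  · refine ⟨n, by exact_mod_cast hn0, ?_⟩
    funext i
    simp only [Pi.smul_apply, Pi.zero_apply, ← AddCircle.coe_nsmul]
    rw [AddCircle.coe_eq_zero_iff]
    refine ⟨⌊r i * n⌋, ?_⟩
    simp only [nsmul_eq_mul, zsmul_eq_mul, mul_one]
    field_simp

lemma open_dense_level (m : ℕ) (c : ℝ) (hc : 0 < c) :
    {θ : Fin m → AddCircle (1 : ℝ) |
        ∃ k : ℕ, 0 < k ∧ dist (k • θ) 0 < Real.exp (-(c * k))} ∈
      residual (Fin m → AddCircle (1 : ℝ)) := by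
  apply residual_of_dense_open
  · have : {θ : Fin m → AddCircle (1 : ℝ) |
        ∃ k : ℕ, 0 < k ∧ dist (k • θ) 0 < Real.exp (-(c * k))} =
        ⋃ k : ℕ, ⋃ _ : 0 < k,
          {θ : Fin m → AddCircle (1 : ℝ) | dist (k • θ) 0 < Real.exp (-(c * k))} := by
      ext θ; simp [Set.mem_iUnion]
    rw [this]
    refine isOpen_iUnion fun k => isOpen_iUnion fun _ => ?_
    have hcont : Continuous fun θ : Fin m → AddCircle (1 : ℝ) => dist (k • θ) 0 :=
      (continuous_id.nsmul k).dist continuous_const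
    exact isOpen_lt hcont continuous_const
  · refine (torsion_dense m).mono ?_
    rintro θ ⟨n, hn0, hn⟩
    exact ⟨n, hn0, by rw [hn]; simpa using Real.exp_pos _⟩

/-- The set of exponentially Liouville elements of the torus `𝕋^m = (Fin m → AddCircle 1)`
(with its product sup metric) is residual. -/
theorem exponentially_liouville_residual (m : ℕ) :
    {θ : Fin m → AddCircle (1 : ℝ) |
        ∀ c : ℝ, 0 < c → ∃ k : ℕ, 0 < k ∧ dist (k • θ) 0 < Real.exp (-(c * k))} ∈
      residual (Fin m → AddCircle (1 : ℝ)) := by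
  have h : (⋂ n : ℕ, {θ : Fin m → AddCircle (1 : ℝ) |
      ∃ k : ℕ, 0 < k ∧ dist (k • θ) 0 < Real.exp (-(((n : ℝ) + 1) * k))}) ∈
      residual (Fin m → AddCircle (1 : ℝ)) :=
    countable_iInter_mem.mpr fun n => open_dense_level m _ (by positivity)
  refine mem_of_superset h ?_
  intro θ hθ c hc
  simp only [Set.mem_iInter] at hθ
  obtain ⟨n, hn⟩ := exists_nat_gt c
  obtain ⟨k, hk0, hk⟩ := hθ n
  refine ⟨k, hk0, lt_of_lt_of_le hk ?_⟩
  apply Real.exp_le_exp.mpr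
  have : (0:ℝ) < k := by exact_mod_cast hk0
  nlinarith
end

section
/- Let Γ be a closed additive subgroup of the m-dimensional torus 𝕋^m = (Fin m → AddCircle (1:ℝ)), regarded as a topological (metric) space with the subspace topology. Then the set of elements θ ∈ Γ that are exponentially Liouville — i.e. such that for every real c > 0 there exists a positive integer k with dist(k • θ, 0) < exp(−c·k) — is residual in Γ. -/
/-!
Torsion points are dense in every closed subgroup of `𝕋^m`, by induction on `m`. For a closed
subgroup `Γ ≤ 𝕋 × A`, the projection `Γ → A` is a surjective homomorphism of compact groups onto
its image, hence open, so torsion points of the image lift to points `γ ∈ Γ` near any given one.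
If `N • γ.2 = 0`, then `N • γ` lies in `K × 0`, where `K = {u | (u, 0) ∈ Γ}` is a closed subgroup
of the circle: either `K` is finite and `γ` is already torsion, or `K = 𝕋` and `γ - (u, 0)` is
torsion for suitable small `u`.

For each `n`, the open set `{θ | ∃ k > 0, dist (k • θ) 0 < exp (-n k)}` contains every torsion
point, hence is dense; the exponentially Liouville points form the intersection of these sets.
-/

open Set Filter Topology

namespace AddCircle

variable {p : ℝ} [Fact (0 < p)]

theorem eq_top_or_forall_isOfFinAddOrder {K : AddSubgroup (AddCircle p)}
    (hK : IsClosed (K : Set (AddCircle p))) : K = ⊤ ∨ ∀ x ∈ K, IsOfFinAddOrder x := by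
  by_cases hd : Dense (K : Set (AddCircle p))
  · left
    rw [← AddSubgroup.coe_eq_univ, ← hK.closure_eq]
    exact hd.closure_eq
  · right
    obtain ⟨a, ha, rfl⟩ : ∃ a, addOrderOf a ≠ 0 ∧ K = .zmultiples a := by
      simpa [dense_addSubgroup_iff_ne_zmultiples] using hd
    exact fun x hx => (addOrderOf_ne_zero_iff.1 ha).of_mem_zmultiples hx

theorem zero_mem_closure_isOfFinAddOrder_sub_nsmul (s : AddCircle p) {N : ℕ} (hN : N ≠ 0) :
    (0 : AddCircle p) ∈ closure {u | IsOfFinAddOrder (s - N • u)} := by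
  have hp : (0 : ℝ) < p := Fact.out
  obtain ⟨r, rfl⟩ := QuotientAddGroup.mk'_surjective _ s
  rw [mem_closure_iff_nhds]
  intro W hW
  have hW' : QuotientAddGroup.mk' _ ⁻¹' W ∈ 𝓝 (0 : ℝ) :=
    (AddCircle.continuous_mk' p).continuousAt.preimage_mem_nhds (by rwa [map_zero])
  obtain ⟨δ, hδ, hball⟩ := Metric.mem_nhds_iff.1 hW'
  obtain ⟨q, hq⟩ := exists_rat_near (r / p) (div_pos hδ hp)
  have hN1 : (1 : ℝ) ≤ N := Nat.one_le_cast.2 (Nat.pos_of_ne_zero hN)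
  -- `u = (r - q p) / N` leaves `s - N • u = q p`, a rational multiple of the period
  refine ⟨((r - q * p) / N : ℝ), hball ?_, ?_⟩
  · rw [Metric.mem_ball, dist_zero_right, Real.norm_eq_abs, abs_div, Nat.abs_cast]
    calc |r - q * p| / N ≤ |r - q * p| := div_le_self (abs_nonneg _) hN1
      _ = |r / p - q| * p := by
          rw [← abs_of_pos hp, ← abs_mul, abs_of_pos hp, sub_mul, div_mul_cancel₀ _ hp.ne']
      _ < δ := by rwa [← lt_div_iff₀ hp]
  · show IsOfFinAddOrder ((r : AddCircle p) - N • (((r - q * p) / N : ℝ) : AddCircle p))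
    rw [← coe_nsmul, ← coe_sub, nsmul_eq_mul, mul_div_cancel₀ _ (by positivity : (N : ℝ) ≠ 0),
      sub_sub_cancel, isOfFinAddOrder_iff_exists_rat_eq_div]
    exact ⟨q, by field_simp⟩

theorem zero_mem_closure_mem_isOfFinAddOrder_sub_nsmul {K : AddSubgroup (AddCircle p)}
    (hK : IsClosed (K : Set (AddCircle p))) {s : AddCircle p} (hs : s ∈ K) {N : ℕ} (hN : N ≠ 0) :
    (0 : AddCircle p) ∈ closure {u | u ∈ K ∧ IsOfFinAddOrder (s - N • u)} := by
  rcases eq_top_or_forall_isOfFinAddOrder hK with rfl | htors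
  · simpa using zero_mem_closure_isOfFinAddOrder_sub_nsmul s hN
  · exact subset_closure ⟨K.zero_mem, by simpa using htors s hs⟩

end AddCircle

theorem Subtype.dense_setOf_iff {X : Type*} [TopologicalSpace X] {s : Set X} {q : X → Prop} :
    Dense {x : s | q x} ↔ s ⊆ closure {x | x ∈ s ∧ q x} := by
  simp [Subtype.dense_iff, Subtype.coe_image, and_comm]

theorem AddMonoidHom.subset_closure_of_subset_closure_map {G H : Type*}
    [AddGroup G] [TopologicalSpace G] [IsTopologicalAddGroup G] [CompactSpace G]
    [AddGroup H] [TopologicalSpace H] [IsTopologicalAddGroup H] [T2Space H]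
    {f : G →+ H} (hf : Continuous f) {Γ : AddSubgroup G} (hΓ : IsClosed (Γ : Set G))
    {P : H → Prop} (h : (Γ.map f : Set H) ⊆ closure {y | y ∈ Γ.map f ∧ P y}) :
    (Γ : Set G) ⊆ closure {x | x ∈ Γ ∧ P (f x)} := by
  have : CompactSpace Γ := isCompact_iff_compactSpace.1 hΓ.isCompact
  have : CompactSpace (Γ.map f) := isCompact_iff_compactSpace.1 <| by
    simpa using hΓ.isCompact.image hf
  have hopen : IsOpenMap (f.addSubgroupMap Γ) :=
    AddMonoidHom.isOpenMap_of_sigmaCompact _ (f.addSubgroupMap_surjective Γ)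
      (by exact (hf.comp continuous_subtype_val).subtype_mk _)
  have hdense : Dense {y : Γ.map f | P y} := Subtype.dense_setOf_iff.2 h
  exact Subtype.dense_setOf_iff.1 (hdense.preimage hopen)

theorem mem_closure_isOfFinAddOrder_of_isOfFinAddOrder_snd {p : ℝ} [Fact (0 < p)] {A : Type*}
    [AddCommGroup A] [TopologicalSpace A] [IsTopologicalAddGroup A] {Γ : AddSubgroup (AddCircle p × A)} (hΓ : IsClosed (Γ : Set (AddCircle p × A)))
    {γ : AddCircle p × A} (hγ : γ ∈ Γ) (hγ₂ : IsOfFinAddOrder γ.2) :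
    γ ∈ closure {x | x ∈ Γ ∧ IsOfFinAddOrder x} := by
  obtain ⟨N, hN, hNγ⟩ := isOfFinAddOrder_iff_nsmul_eq_zero.1 hγ₂
  set K := Γ.comap (AddMonoidHom.inl (AddCircle p) A)
  have hK : IsClosed (K : Set (AddCircle p)) :=
    hΓ.preimage (continuous_id.prodMk continuous_const)
  have hNγ' : N • γ = ((N • γ).1, 0) := Prod.ext rfl hNγ
  have hs : (N • γ).1 ∈ K := by
    show ((N • γ).1, (0 : A)) ∈ Γ
    rw [← hNγ']
    exact Γ.nsmul_mem hγ N
  have h0 := AddCircle.zero_mem_closure_mem_isOfFinAddOrder_sub_nsmul hK hs hN.ne'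
  have hcont : Continuous fun u : AddCircle p => γ - (u, 0) := by fun_prop
  have hmaps : MapsTo (fun u : AddCircle p => γ - (u, 0))
      {u | u ∈ K ∧ IsOfFinAddOrder ((N • γ).1 - N • u)} {x | x ∈ Γ ∧ IsOfFinAddOrder x} := by
    intro u hu
    refine ⟨Γ.sub_mem hγ hu.1, IsOfFinAddOrder.of_nsmul (n := N) ?_ hN.ne'⟩
    have : N • (γ - (u, 0)) = AddMonoidHom.inl (AddCircle p) A ((N • γ).1 - N • u) := by
      rw [smul_sub, hNγ']
      ext <;> simp
    rw [this]
    exact AddMonoidHom.isOfFinAddOrder _ hu.2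
  simpa [Prod.mk_zero_zero] using map_mem_closure hcont h0 hmaps

def ClosedSubgroupsHaveDenseTorsion (G : Type*) [AddGroup G] [TopologicalSpace G] : Prop :=
  ∀ Γ : AddSubgroup G, IsClosed (Γ : Set G) → (Γ : Set G) ⊆ closure {x | x ∈ Γ ∧ IsOfFinAddOrder x}

namespace ClosedSubgroupsHaveDenseTorsion

theorem of_finite {G : Type*} [AddGroup G] [TopologicalSpace G] [Finite G] :
    ClosedSubgroupsHaveDenseTorsion G :=
  fun _ _ x hx => subset_closure ⟨hx, isOfFinAddOrder_of_finite x⟩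

theorem of_surjective {G H : Type*} [AddGroup G] [TopologicalSpace G] [AddGroup H]
    [TopologicalSpace H] (hG : ClosedSubgroupsHaveDenseTorsion G) {f : G →+ H}
    (hf : Continuous f) (hsurj : Function.Surjective f) : ClosedSubgroupsHaveDenseTorsion H := by
  rintro Γ hΓ y hy
  obtain ⟨x, rfl⟩ := hsurj y
  exact map_mem_closure hf (hG (Γ.comap f) (hΓ.preimage hf) hy)
    fun x' hx' => ⟨hx'.1, f.isOfFinAddOrder hx'.2⟩

theorem addCircle_prod {p : ℝ} [Fact (0 < p)] {A : Type*} [AddCommGroup A] [TopologicalSpace A]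
    [IsTopologicalAddGroup A] [CompactSpace A] [T2Space A]
    (hA : ClosedSubgroupsHaveDenseTorsion A) :
    ClosedSubgroupsHaveDenseTorsion (AddCircle p × A) := by
  intro Γ hΓ
  have hΓA : IsClosed (Γ.map (AddMonoidHom.snd (AddCircle p) A) : Set A) := by
    simpa using (hΓ.isCompact.image continuous_snd).isClosed
  refine (AddMonoidHom.subset_closure_of_subset_closure_map continuous_snd hΓ (hA _ hΓA)).trans ?_
  exact closure_minimal
    (fun γ hγ => mem_closure_isOfFinAddOrder_of_isOfFinAddOrder_snd hΓ hγ.1 hγ.2) isClosed_closure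

end ClosedSubgroupsHaveDenseTorsion

theorem closedSubgroupsHaveDenseTorsion_pi_addCircle (p : ℝ) [Fact (0 < p)] (m : ℕ) :
    ClosedSubgroupsHaveDenseTorsion (Fin m → AddCircle p) := by
  induction m with
  | zero => exact .of_finite
  | succ m ih =>
    let e := Fin.consEquivL ℤ fun _ : Fin (m + 1) => AddCircle p
    exact ih.addCircle_prod.of_surjective (f := e.toLinearMap.toAddMonoidHom) e.continuous
      e.surjective

def IsExpLiouville {G : Type*} [PseudoMetricSpace G] [AddMonoid G] (θ : G) : Prop :=
  ∀ c : ℝ, 0 < c → ∃ k : ℕ, 0 < k ∧ dist (k • θ) 0 < Real.exp (-(c * k))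

theorem residual_setOf_isExpLiouville {G : Type*} [PseudoMetricSpace G] [AddMonoid G]
    [ContinuousAdd G] (h : Dense {θ : G | IsOfFinAddOrder θ}) :
    {θ : G | IsExpLiouville θ} ∈ residual G := by
  set U : ℕ → Set G :=
    fun n => ⋃ (k : ℕ) (_ : 0 < k), {θ | dist (k • θ) 0 < Real.exp (-(n * k : ℝ))}
  have hU : ∀ n, U n ∈ residual G := by
    intro n
    refine residual_of_dense_open ?_ (h.mono ?_)
    · exact isOpen_biUnion fun k _ => isOpen_lt (by fun_prop) continuous_const
    · intro θ hθ
      obtain ⟨k, hk, hkθ⟩ := isOfFinAddOrder_iff_nsmul_eq_zero.1 hθ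
      exact mem_biUnion hk (by simp [hkθ, Real.exp_pos])
  refine mem_of_superset (countable_iInter_mem.2 hU) fun θ hθ c hc => ?_
  obtain ⟨n, hn⟩ := exists_nat_ge c
  obtain ⟨k, hk, hkθ⟩ := mem_iUnion₂.1 (mem_iInter.1 hθ n)
  refine ⟨k, hk, hkθ.trans_le (Real.exp_le_exp.2 ?_)⟩
  have : c * k ≤ n * k := mul_le_mul_of_nonneg_right hn k.cast_nonneg
  linarith

/-- For a closed additive subgroup `Γ` of the torus `𝕋^m = (Fin m → AddCircle 1)`,
the set of exponentially Liouville elements of `Γ` is residual in `Γ`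
(with its subspace topology/metric). -/
theorem exponentially_liouville_residual_closed_subgroup (m : ℕ)
    (Γ : AddSubgroup (Fin m → AddCircle (1 : ℝ))) (hΓ : IsClosed (Γ : Set (Fin m → AddCircle (1 : ℝ)))) :
    {θ : Γ | ∀ c : ℝ, 0 < c → ∃ k : ℕ, 0 < k ∧ dist (k • θ) 0 < Real.exp (-(c * k))} ∈
      residual Γ := by
  refine residual_setOf_isExpLiouville ?_
  have h := closedSubgroupsHaveDenseTorsion_pi_addCircle 1 m Γ hΓ
  exact (Subtype.dense_setOf_iff.2 h).mono fun x hx => AddSubmonoid.isOfFinAddOrder_coe.1 hx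
end

section
/- For every real c > 0, the set V_c = {θ ∈ 𝕋^m : there exists a positive integer k with dist(k • θ, 0) < exp(−c·k)} is open and dense in the m-dimensional torus 𝕋^m = (Fin m → AddCircle (1:ℝ)). -/
/-!
The sets in question are unions over `k ≥ 1` of preimages of open balls under the continuous
maps `θ ↦ k • θ`, hence open. They contain every torsion point of the torus (`k • θ = 0` for
some `k ≥ 1`), and torsion points are dense: on the circle the torsion subgroup is infinite, so
it is not cyclic, and the non-cyclic subgroups of the circle are exactly the dense ones.
-/

theorem isOpen_setOf_exists_nsmul_dist_lt {G : Type*} [AddMonoid G] [PseudoMetricSpace G]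
    [ContinuousAdd G] (ε : ℕ → ℝ) :
    IsOpen {x : G | ∃ k : ℕ, 0 < k ∧ dist (k • x) 0 < ε k} := by
  simp only [Set.ofPred_exists, Set.ofPred_and]
  exact isOpen_iUnion fun k =>
    isOpen_const.inter (isOpen_lt ((continuous_nsmul k).dist continuous_const) continuous_const)

theorem AddCircle.dense_torsion (p : ℝ) [Fact (0 < p)] :
    Dense (AddCommGroup.torsion (AddCircle p) : Set (AddCircle p)) := by
  refine AddCircle.dense_addSubgroup_iff_ne_zmultiples.2 fun a ha h => ?_
  set n := addOrderOf a
  set b : AddCircle p := ((p / (n + 1 : ℕ) : ℝ) : AddCircle p)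
  have hb : addOrderOf b = n + 1 := AddCircle.addOrderOf_period_div n.succ_pos
  have hb_torsion : b ∈ AddCommGroup.torsion (AddCircle p) := addOrderOf_pos_iff.1 (by omega)
  have hdvd : n + 1 ∣ n := hb ▸ addOrderOf_dvd_of_mem_zmultiples (h ▸ hb_torsion)
  exact absurd (Nat.le_of_dvd (Nat.pos_of_ne_zero ha) hdvd) (by omega)

theorem AddCircle.dense_setOf_isOfFinAddOrder_pi (ι : Type*) [Finite ι] (p : ℝ) [Fact (0 < p)] :
    Dense {θ : ι → AddCircle p | IsOfFinAddOrder θ} :=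
  (dense_pi Set.univ fun _ _ => AddCircle.dense_torsion p).mono fun _ hθ =>
    IsOfFinAddOrder.pi fun i => Set.mem_univ_pi.1 hθ i

theorem exponentially_liouville_approx_open_dense_general (m : ℕ) (c : ℝ) :
    IsOpen {θ : Fin m → AddCircle (1 : ℝ) |
        ∃ k : ℕ, 0 < k ∧ dist (k • θ) 0 < Real.exp (-(c * k))} ∧
      Dense {θ : Fin m → AddCircle (1 : ℝ) |
        ∃ k : ℕ, 0 < k ∧ dist (k • θ) 0 < Real.exp (-(c * k))} := by
  refine ⟨isOpen_setOf_exists_nsmul_dist_lt _,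
    (AddCircle.dense_setOf_isOfFinAddOrder_pi (Fin m) 1).mono fun θ hθ => ?_⟩
  obtain ⟨k, hk, hkθ⟩ := isOfFinAddOrder_iff_nsmul_eq_zero.1 hθ
  exact ⟨k, hk, by simpa [hkθ] using Real.exp_pos _⟩

/-- For every `c > 0`, the set
`V_c = {θ ∈ 𝕋^m | ∃ k ≥ 1, dist (k • θ, 0) < exp (-c k)}` is open and dense in the torus
`𝕋^m = (Fin m → AddCircle 1)`. -/
theorem exponentially_liouville_approx_open_dense (m : ℕ) (c : ℝ) (hc : 0 < c) :
    IsOpen {θ : Fin m → AddCircle (1 : ℝ) |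
        ∃ k : ℕ, 0 < k ∧ dist (k • θ) 0 < Real.exp (-(c * k))} ∧
      Dense {θ : Fin m → AddCircle (1 : ℝ) |
        ∃ k : ℕ, 0 < k ∧ dist (k • θ) 0 < Real.exp (-(c * k))} :=
  exponentially_liouville_approx_open_dense_general m c
end

section
/- Let m ≥ 1. The set of exponentially Liouville elements of the m-dimensional torus 𝕋^m = (Fin m → AddCircle (1:ℝ)) — i.e. the set of θ such that for every real c > 0 there exists a positive integer k with dist(k • θ, 0) < exp(−c·k) — has Haar (volume) measure zero in 𝕋^m. -/
open Set Function MeasureTheory Metric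

lemma circle_smul_ball_measure (k : ℕ) (hk : 0 < k) (ε : ℝ) :
    volume {x : AddCircle (1 : ℝ) | dist (k • x) 0 ≤ ε} ≤ ENNReal.ofReal (2 * ε) := by
  have hk' : (k : ℤ) ≠ 0 := by exact_mod_cast hk.ne'
  have hmp := MeasureTheory.Measure.measurePreserving_zsmul
    (volume : Measure (AddCircle (1 : ℝ))) hk'
  have hset : {x : AddCircle (1 : ℝ) | dist (k • x) 0 ≤ ε}
      = (fun x : AddCircle (1 : ℝ) => (k : ℤ) • x) ⁻¹' closedBall 0 ε := by
    ext x
    simp [natCast_zsmul, Metric.mem_closedBall]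
  rw [hset, hmp.measure_preimage measurableSet_closedBall.nullMeasurableSet,
    AddCircle.volume_closedBall]
  exact ENNReal.ofReal_le_ofReal (min_le_right _ _)

lemma cylinder_measure {m : ℕ} (i0 : Fin m) (s : Set (AddCircle (1 : ℝ)))
    (hs : MeasurableSet s) :
    volume {θ : Fin m → AddCircle (1 : ℝ) | θ i0 ∈ s} = volume s := by
  have : {θ : Fin m → AddCircle (1 : ℝ) | θ i0 ∈ s}
      = Set.pi univ (Function.update (fun _ : Fin m => (univ : Set (AddCircle (1 : ℝ)))) i0 s) := by
    rw [← Set.eval_preimage]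
    rfl
  rw [this, volume_pi_pi]
  rw [Finset.prod_eq_single i0]
  · simp
  · intro j _ hj
    simp [Function.update_of_ne hj, AddCircle.measure_univ]
  · simp

/-- For `m ≥ 1`, the set of exponentially Liouville elements of the torus
`𝕋^m = (Fin m → AddCircle 1)` has Haar (volume) measure zero. -/
theorem exponentially_liouville_measure_zero (m : ℕ) (hm : 1 ≤ m) :
    MeasureTheory.volume
      {θ : Fin m → AddCircle (1 : ℝ) |
        ∀ c : ℝ, 0 < c → ∃ k : ℕ, 0 < k ∧ dist (k • θ) 0 < Real.exp (-(c * k))} = 0 := by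
  set i0 : Fin m := ⟨0, hm⟩
  set S := {θ : Fin m → AddCircle (1 : ℝ) |
        ∀ c : ℝ, 0 < c → ∃ k : ℕ, 0 < k ∧ dist (k • θ) 0 < Real.exp (-(c * k))}
  refine le_antisymm ?_ zero_le
  refine ENNReal.le_of_forall_pos_le_add fun δ hδ _ => ?_
  rw [zero_add, ← ENNReal.ofReal_coe_nnreal]
  set δ' : ℝ := (δ : ℝ) with hδ'def
  have hδ' : 0 < δ' := hδ
  -- choose c
  set a : ℝ := min (1/2) (δ' / 8) with ha_def
  have ha : 0 < a := lt_min (by norm_num) (by linarith)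
  set c : ℝ := max 1 (-Real.log a) with hc_def
  have hc : 0 < c := lt_of_lt_of_le zero_lt_one (le_max_left _ _)
  set r : ℝ := Real.exp (-c) with hr_def
  have hr0 : 0 < r := Real.exp_pos _
  have hra : r ≤ a := by
    have : -c ≤ Real.log a := by
      have := le_max_right 1 (-Real.log a)
      linarith
    calc r ≤ Real.exp (Real.log a) := Real.exp_le_exp.mpr this
      _ = a := Real.exp_log ha
  have hr_half : r ≤ 1/2 := hra.trans (min_le_left _ _)
  have hr_small : r ≤ δ' / 8 := hra.trans (min_le_right _ _)
  have hr1 : r < 1 := lt_of_le_of_lt hr_half (by norm_num)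
  -- the covering sets
  set A : ℕ → Set (Fin m → AddCircle (1 : ℝ)) :=
    fun k => {θ | dist ((k : ℕ) • θ i0) 0 ≤ Real.exp (-(c * k))} with hA_def
  have hSsub : S ⊆ ⋃ k : ℕ, A (k + 1) := by
    intro θ hθ
    obtain ⟨k, hk0, hkd⟩ := hθ c hc
    have h1 : dist (k • θ i0) 0 ≤ dist (k • θ) 0 := by
      have := dist_le_pi_dist (k • θ) 0 i0
      simpa using this
    have hθA : θ ∈ A k := le_trans h1 hkd.le
    exact Set.mem_iUnion.mpr ⟨k - 1, by rwa [Nat.sub_add_cancel hk0]⟩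
  have hAvol : ∀ k : ℕ, volume (A (k + 1)) ≤ ENNReal.ofReal (2 * r * r ^ k) := by
    intro k
    have hexp : Real.exp (-(c * (k + 1 : ℕ))) = r * r ^ k := by
      rw [hr_def, ← Real.exp_nat_mul, ← Real.exp_add]
      congr 1
      push_cast
      ring
    have h1 : volume (A (k + 1)) ≤ volume
        {θ : Fin m → AddCircle (1 : ℝ) | θ i0 ∈
          {x : AddCircle (1 : ℝ) | dist ((k + 1 : ℕ) • x) 0 ≤ Real.exp (-(c * (k + 1 : ℕ)))}} := by
      exact measure_mono fun θ hθ => hθ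
    have hmeas : MeasurableSet {x : AddCircle (1 : ℝ) |
        dist ((k + 1 : ℕ) • x) 0 ≤ Real.exp (-(c * (k + 1 : ℕ)))} := by
      have : Continuous fun x : AddCircle (1 : ℝ) => dist ((k + 1 : ℕ) • x) 0 :=
        (continuous_const_smul _).dist continuous_const
      exact measurableSet_le this.measurable measurable_const
    calc volume (A (k + 1)) ≤ _ := h1
      _ = volume {x : AddCircle (1 : ℝ) |
            dist ((k + 1 : ℕ) • x) 0 ≤ Real.exp (-(c * (k + 1 : ℕ)))} :=
        cylinder_measure i0 _ hmeas
      _ ≤ ENNReal.ofReal (2 * Real.exp (-(c * (k + 1 : ℕ)))) :=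
        circle_smul_ball_measure (k + 1) (Nat.succ_pos k) _
      _ = ENNReal.ofReal (2 * r * r ^ k) := by rw [hexp, mul_assoc]
  have hsummable : Summable (fun k : ℕ => 2 * r * r ^ k) :=
    (summable_geometric_of_lt_one hr0.le hr1).mul_left _
  calc volume S ≤ volume (⋃ k : ℕ, A (k + 1)) := measure_mono hSsub
    _ ≤ ∑' k : ℕ, volume (A (k + 1)) := measure_iUnion_le _
    _ ≤ ∑' k : ℕ, ENNReal.ofReal (2 * r * r ^ k) := ENNReal.tsum_le_tsum hAvol
    _ = ENNReal.ofReal (∑' k : ℕ, 2 * r * r ^ k) :=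
        (ENNReal.ofReal_tsum_of_nonneg (fun k => mul_nonneg (mul_nonneg two_pos.le hr0.le) (pow_nonneg hr0.le k)) hsummable).symm
    _ ≤ ENNReal.ofReal δ' := by
        apply ENNReal.ofReal_le_ofReal
        rw [tsum_mul_left, tsum_geometric_of_lt_one hr0.le hr1]
        have h2 : (1 - r)⁻¹ ≤ 2 := by
          rw [inv_le_comm₀ (by linarith) (by norm_num)]
          linarith
        have hnn : 0 ≤ 2 * r := mul_nonneg two_pos.le hr0.le
        nlinarith [mul_le_mul hnn h2 (inv_nonneg.mpr (by linarith) : (0:ℝ) ≤ (1 - r)⁻¹) hnn]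
end

section
/- Let G be a compact Hausdorff topological abelian additive group and let θ ∈ G. Then the topological closure of the positive semi-orbit {k • θ : k ∈ ℕ, k ≥ 1} is an additive subgroup of G: it contains 0, and is closed under addition and negation. -/
/-!
In a compact topological group every integer multiple `m • θ` is a cluster point of the
sequence `n • θ` as `n → ∞` (a cluster point `y` of `n • θ` gives `m • θ` as a cluster point
of `(m + b - a) • θ = m • θ + b • θ - a • θ` with `a • θ, b • θ → y`). Discarding finitely
many terms does not change the cluster points, so the closure of the positive semi-orbit is
the closure of the cyclic subgroup generated by `θ`, which is a subgroup.
-/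

open Filter

theorem closure_semiorbit_eq_topologicalClosure_zmultiples {G : Type*} [AddGroup G]
    [TopologicalSpace G] [IsTopologicalAddGroup G] [CompactSpace G] (θ : G) :
    closure {x : G | ∃ k : ℕ, 1 ≤ k ∧ x = k • θ} =
      ((AddSubgroup.zmultiples θ).topologicalClosure : Set G) := by
  refine (closure_mono ?_).antisymm fun x hx => ?_
  · rintro x ⟨k, -, rfl⟩
    exact natCast_zsmul θ k ▸ AddSubgroup.zsmul_mem_zmultiples θ k
  · have hclus : MapClusterPt x atTop (· • θ : ℕ → G) :=
      mapClusterPt_atTop_nsmul_iff_mem_topologicalClosure_zmultiples.2 hx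
    have htail : {x : G | ∃ k : ℕ, 1 ≤ k ∧ x = k • θ} ∈ map (· • θ : ℕ → G) atTop :=
      mem_map.2 <| mem_of_superset (mem_atTop 1) fun k hk => ⟨k, hk, rfl⟩
    exact hclus.mem_closure_of_mem _ htail

theorem closure_semiorbit_isAddSubgroup_general {G : Type*} [AddCommGroup G] [TopologicalSpace G]
    [IsTopologicalAddGroup G] [CompactSpace G] (θ : G) :
    (0 : G) ∈ closure {x : G | ∃ k : ℕ, 1 ≤ k ∧ x = k • θ} ∧
      (∀ a b : G, a ∈ closure {x : G | ∃ k : ℕ, 1 ≤ k ∧ x = k • θ} →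
        b ∈ closure {x : G | ∃ k : ℕ, 1 ≤ k ∧ x = k • θ} →
        a + b ∈ closure {x : G | ∃ k : ℕ, 1 ≤ k ∧ x = k • θ}) ∧
      (∀ a : G, a ∈ closure {x : G | ∃ k : ℕ, 1 ≤ k ∧ x = k • θ} →
        -a ∈ closure {x : G | ∃ k : ℕ, 1 ≤ k ∧ x = k • θ}) := by
  rw [closure_semiorbit_eq_topologicalClosure_zmultiples]
  set H := (AddSubgroup.zmultiples θ).topologicalClosure
  exact ⟨H.zero_mem, fun _ _ => H.add_mem, fun _ => H.neg_mem⟩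

/-- In a compact Hausdorff topological abelian group, the topological closure of the
positive semi-orbit `{k • θ : k ∈ ℕ, k ≥ 1}` of any element `θ` is an additive subgroup:
it contains `0` and is closed under addition and negation. -/
theorem closure_semiorbit_isAddSubgroup {G : Type*} [AddCommGroup G] [TopologicalSpace G]
    [IsTopologicalAddGroup G] [CompactSpace G] [T2Space G] (θ : G) :
    (0 : G) ∈ closure {x : G | ∃ k : ℕ, 1 ≤ k ∧ x = k • θ} ∧
      (∀ a b : G, a ∈ closure {x : G | ∃ k : ℕ, 1 ≤ k ∧ x = k • θ} →
        b ∈ closure {x : G | ∃ k : ℕ, 1 ≤ k ∧ x = k • θ} →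
        a + b ∈ closure {x : G | ∃ k : ℕ, 1 ≤ k ∧ x = k • θ}) ∧
      (∀ a : G, a ∈ closure {x : G | ∃ k : ℕ, 1 ≤ k ∧ x = k • θ} →
        -a ∈ closure {x : G | ∃ k : ℕ, 1 ≤ k ∧ x = k • θ}) :=
  closure_semiorbit_isAddSubgroup_general θ
end

section
/- Every closed additive subgroup Γ of the m-dimensional torus 𝕋^m = (Fin m → AddCircle (1:ℝ)), regarded as a topological space with the subspace topology, has only finitely many connected components; equivalently, the connected component of 0 in Γ has finite index in Γ. -/
/-!
Let `π : ℝ^m → 𝕋^m` be the quotient map and `W = {v | π (t • v) ∈ Γ for all t}`, a linear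
subspace whose image `π W ⊆ Γ` is connected. If nonzero vectors `w n → 0` of a complement of `W`
had `π (w n) ∈ Γ`, a limit `a` of `w n / ‖w n‖` would satisfy
`π (t • a) = lim π (⌊t / ‖w n‖⌋ • w n) ∈ Γ` for every `t`, i.e. `a ∈ W`, which is absurd.
Hence `π W` is a neighbourhood of `0` in `Γ` (as `π` is open), so the identity component of the
compact group `Γ` is open, and there are only finitely many components.
-/

open Filter Topology Set

section

variable {E G : Type*} [AddCommGroup E] [Module ℝ E] [AddGroup G]

/-- When `π` is the exponential map of a Lie group `G`, this is the Lie algebra of `Γ`. -/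
def tangentSubspace (π : E →+ G) (Γ : AddSubgroup G) : Submodule ℝ E where
  carrier := {v | ∀ t : ℝ, π (t • v) ∈ Γ}
  zero_mem' t := by simp
  add_mem' hv hw t := by simpa [smul_add] using Γ.add_mem (hv t) (hw t)
  smul_mem' c v hv t := by simpa [smul_smul] using hv (t * c)

lemma map_mem_of_mem_tangentSubspace {π : E →+ G} {Γ : AddSubgroup G} {v : E}
    (hv : v ∈ tangentSubspace π Γ) : π v ∈ Γ := by
  simpa using hv 1

end

section

variable {E G : Type*} [NormedAddCommGroup E] [NormedSpace ℝ E] [AddGroup G] [TopologicalSpace G]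
  {π : E →+ G} {Γ : AddSubgroup G}

lemma mem_tangentSubspace_of_tendsto (hπ : Continuous π) (hΓ : IsClosed (Γ : Set G))
    {w : ℕ → E} {a : E} (hw0 : ∀ n, w n ≠ 0) (hw : Tendsto w atTop (𝓝 0))
    (hwΓ : ∀ n, π (w n) ∈ Γ) (ha : Tendsto (fun n ↦ ‖w n‖⁻¹ • w n) atTop (𝓝 a)) :
    a ∈ tangentSubspace π Γ := by
  intro t
  set r := fun n ↦ ‖w n‖
  have hr : ∀ n, 0 < r n := fun n ↦ norm_pos_iff.2 (hw0 n)
  have hr0 : Tendsto r atTop (𝓝 0) := tendsto_zero_iff_norm_tendsto_zero.1 hw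
  have hk : Tendsto (fun n ↦ (⌊t / r n⌋ : ℝ) * r n) atTop (𝓝 t) := by
    have herr : Tendsto (fun n ↦ Int.fract (t / r n) * r n) atTop (𝓝 0) :=
      squeeze_zero (fun n ↦ mul_nonneg (Int.fract_nonneg _) (hr n).le)
        (fun n ↦ mul_le_of_le_one_left (hr n).le (Int.fract_lt_one _).le) hr0
    have hfloor : ∀ n, (⌊t / r n⌋ : ℝ) * r n = t - Int.fract (t / r n) * r n := fun n ↦ by
      rw [Int.fract, sub_mul, div_mul_cancel₀ t (hr n).ne', sub_sub_cancel]
    simpa [hfloor] using tendsto_const_nhds.sub herr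
  refine hΓ.mem_of_tendsto ((hπ.tendsto _).comp (hk.smul ha)) (.of_forall fun n ↦ ?_)
  have hmul : ((⌊t / r n⌋ : ℝ) * r n) • (r n)⁻¹ • w n = ⌊t / r n⌋ • w n := by
    rw [mul_smul, smul_inv_smul₀ (hr n).ne', Int.cast_smul_eq_zsmul]
  change π (((⌊t / r n⌋ : ℝ) * r n) • (r n)⁻¹ • w n) ∈ Γ
  rw [hmul, map_zsmul]
  exact Γ.zsmul_mem (hwΓ n) _

variable [FiniteDimensional ℝ E]

lemma eventually_eq_zero_of_isCompl (hπ : Continuous π) (hΓ : IsClosed (Γ : Set G))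
    {W' : Submodule ℝ E} (hW' : IsCompl (tangentSubspace π Γ) W') :
    ∀ᶠ w in 𝓝 (0 : E), w ∈ W' → π w ∈ Γ → w = 0 := by
  by_contra h
  obtain ⟨w, hw, hwW'⟩ := frequently_iff_seq_forall.1 (not_eventually.1 h)
  simp only [Classical.not_imp] at hwW'
  have hK : IsCompact (Metric.sphere (0 : E) 1 ∩ W') :=
    (isCompact_sphere 0 1).inter_right W'.closed_of_finiteDimensional
  obtain ⟨a, ⟨ha1, haW'⟩, φ, hφ, ha⟩ := hK.tendsto_subseq (x := fun n ↦ ‖w n‖⁻¹ • w n)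
    fun n ↦ ⟨by simp [norm_smul, (hwW' n).2.2], W'.smul_mem _ (hwW' n).1⟩
  have haW : a ∈ tangentSubspace π Γ :=
    mem_tangentSubspace_of_tendsto hπ hΓ (fun n ↦ (hwW' _).2.2) (hw.comp hφ.tendsto_atTop)
      (fun n ↦ (hwW' _).2.1) ha
  have ha0 : a = 0 := Submodule.disjoint_def.1 hW'.disjoint a haW haW'
  simp [ha0] at ha1

lemma eventually_mem_tangentSubspace (hπ : Continuous π) (hΓ : IsClosed (Γ : Set G)) :
    ∀ᶠ v in 𝓝 (0 : E), π v ∈ Γ → v ∈ tangentSubspace π Γ := by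
  set W := tangentSubspace π Γ
  obtain ⟨W', hW'⟩ := W.exists_isCompl
  set p := W'.projection W hW'.symm
  have hp : Tendsto p (𝓝 0) (𝓝 0) := by
    simpa using p.continuous_of_finiteDimensional.tendsto 0
  filter_upwards [hp.eventually (eventually_eq_zero_of_isCompl hπ hΓ hW')] with v hv hvΓ
  have hsplit := W.projection_add_projection_eq_self hW' v
  have hpΓ : π (p v) ∈ Γ := by
    rw [← add_sub_cancel_left (W.projection W' hW' v) (p v), hsplit, map_sub]
    exact Γ.sub_mem hvΓ (map_mem_of_mem_tangentSubspace (W.projection_apply_mem _ _))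
  exact (W'.projection_apply_eq_zero_iff hW'.symm).1 (hv (W'.projection_apply_mem _ _) hpΓ)

lemma eventually_mem_image_tangentSubspace (hπ : Continuous π) (hπo : IsOpenMap π)
    (hΓ : IsClosed (Γ : Set G)) :
    ∀ᶠ z in 𝓝 (0 : G), z ∈ Γ → z ∈ π '' tangentSubspace π Γ := by
  have h := hπo.image_mem_nhds (eventually_mem_tangentSubspace hπ hΓ)
  rw [map_zero] at h
  filter_upwards [h] with z ⟨v, hv, hvz⟩ hz
  exact ⟨v, hv (hvz ▸ hz), hvz⟩

lemma connectedComponent_zero_mem_nhds_of_isOpenMap (hπ : Continuous π) (hπo : IsOpenMap π)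
    (hΓ : IsClosed (Γ : Set G)) : connectedComponent (0 : Γ) ∈ 𝓝 0 := by
  set W := tangentSubspace π Γ
  let f : W → Γ := fun v ↦ ⟨π v, map_mem_of_mem_tangentSubspace v.2⟩
  have : PreconnectedSpace W := Subtype.preconnectedSpace W.convex.isPreconnected
  have hf : IsPreconnected (range f) := isPreconnected_range (by fun_prop)
  filter_upwards [(continuous_subtype_val.tendsto 0).eventually
    (eventually_mem_image_tangentSubspace hπ hπo hΓ)] with x hx
  obtain ⟨v, hv, hvx⟩ := hx x.2
  exact hf.subset_connectedComponent ⟨0, Subtype.ext (map_zero π)⟩ ⟨⟨v, hv⟩, Subtype.ext hvx⟩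

end

lemma finite_connectedComponents_of_connectedComponent_zero_mem_nhds {H : Type*}
    [TopologicalSpace H] [AddGroup H] [IsTopologicalAddGroup H] [CompactSpace H]
    (h : connectedComponent (0 : H) ∈ 𝓝 0) : Finite (ConnectedComponents H) := by
  have h0 : IsOpen (connectedComponent (0 : H)) :=
    (AddSubgroup.connectedComponentOfZero H).isOpen_of_mem_nhds h
  have : DiscreteTopology (ConnectedComponents H) :=
    ConnectedComponents.discreteTopology_iff.2 fun x ↦ by
      simpa [vadd_connectedComponent] using h0.vadd x
  exact finite_of_compact_of_discrete

/-- Every closed additive subgroup of the torus `𝕋^m = (Fin m → AddCircle 1)` has only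
finitely many connected components (with respect to the subspace topology). -/
theorem closed_subgroup_torus_finite_components (m : ℕ)
    (Γ : AddSubgroup (Fin m → AddCircle (1 : ℝ)))
    (hΓ : IsClosed (Γ : Set (Fin m → AddCircle (1 : ℝ)))) :
    Finite (ConnectedComponents Γ) := by
  let π : (Fin m → ℝ) →+ (Fin m → AddCircle (1 : ℝ)) := (QuotientAddGroup.mk' _).compLeft (Fin m)
  have hπ : Continuous π := continuous_pi fun i ↦ continuous_quotient_mk'.comp (continuous_apply i)
  have hπo : IsOpenMap π := IsOpenMap.piMap (fun _ ↦ QuotientAddGroup.isOpenMap_coe)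
    (.of_forall fun _ ↦ QuotientAddGroup.mk_surjective)
  have : CompactSpace Γ := isCompact_iff_compactSpace.1 hΓ.isCompact
  exact finite_connectedComponents_of_connectedComponent_zero_mem_nhds
    (connectedComponent_zero_mem_nhds_of_isOpenMap hπ hπo hΓ)
end

section
/- Let G be a compact metrizable Hausdorff topological abelian additive group, θ ∈ G, and let Γ be the topological closure of {k • θ : k ∈ ℕ, k ≥ 1}, which is a compact subgroup of G. Let μ be the Haar probability measure on Γ (with the subspace topology and its Borel σ-algebra). Then the positive semi-orbit of θ is uniformly distributed in Γ: for every continuous function f : G → ℝ, the Birkhoff averages (1/k)·∑_{ℓ=1}^{k} f(ℓ • θ) converge, as k → ∞, to ∫_Γ f(x) dμ(x). -/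
/-!
Write `A n y` for the average of `f` over `y + θ, …, y + n • θ`. Translation invariance of `μ`
gives `∫ A n dμ = ∫ f dμ` for every `n ≥ 1`. Uniform continuity of `f` makes the family `(A n)`
equicontinuous, and `A n (y + θ) - A n y = O(1/n)`; hence `A n y - A n 0 → 0` first along the
orbit of `θ` and then, by equicontinuity, on its closure `Γ`. Dominated convergence turns this
into `∫ f dμ - A n 0 → 0`.
-/

open MeasureTheory Filter Topology Set Bornology

section BirkhoffAverage

variable (𝕜 : Type*) {α E : Type*} [RCLike 𝕜] [NormedAddCommGroup E] [NormedSpace 𝕜 E]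

theorem dist_birkhoffAverage_birkhoffAverage_le_of_forall_dist_le {f : α → α} {g : α → E}
    {x y : α} {C : ℝ} (h : ∀ k, dist (g (f^[k] x)) (g (f^[k] y)) ≤ C) (n : ℕ) :
    dist (birkhoffAverage 𝕜 f g n x) (birkhoffAverage 𝕜 f g n y) ≤ C := by
  have hC : 0 ≤ C := dist_nonneg.trans (h 0)
  calc dist (birkhoffAverage 𝕜 f g n x) (birkhoffAverage 𝕜 f g n y)
      ≤ (∑ k ∈ Finset.range n, dist (g (f^[k] x)) (g (f^[k] y))) / n :=
        dist_birkhoffAverage_birkhoffAverage_le 𝕜 f g n x y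
    _ ≤ (∑ _k ∈ Finset.range n, C) / n := by gcongr with k; exact h k
    _ = n * C / n := by simp
    _ ≤ C := by rcases eq_or_ne n 0 with rfl | hn <;> simp [*, mul_div_cancel_left₀]

theorem uniformEquicontinuous_birkhoffAverage_add_right {G : Type*} [AddGroup G] [UniformSpace G]
    [IsUniformAddGroup G] {g : G → E} (hg : UniformContinuous g) (θ : G) :
    UniformEquicontinuous (birkhoffAverage 𝕜 (· + θ) g) := by
  refine Metric.uniformity_basis_dist_le.uniformEquicontinuous_iff_right.2 fun ε hε ↦ ?_
  have hgε := hg (Metric.uniformity_basis_dist_le.mem_of_mem hε)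
  rw [uniformity_eq_comap_nhds_zero G] at hgε ⊢
  obtain ⟨V, hV, hVε⟩ := mem_comap.1 hgε
  filter_upwards [preimage_mem_comap hV] with p hp n
  refine dist_birkhoffAverage_birkhoffAverage_le_of_forall_dist_le 𝕜 (fun k ↦ ?_) n
  exact @hVε ((· + θ)^[k] p.1, (· + θ)^[k] p.2) (by simpa [add_sub_add_right_eq_sub] using hp)

theorem tendsto_birkhoffAverage_sub_of_denseRange [TopologicalSpace α] {f : α → α} {g : α → E}
    (hF : Equicontinuous (birkhoffAverage 𝕜 f g)) (hg : IsBounded (range g)) {x : α}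
    (hx : DenseRange fun m : ℕ ↦ f^[m] x) (y : α) :
    Tendsto (fun n ↦ birkhoffAverage 𝕜 f g n y - birkhoffAverage 𝕜 f g n x) atTop (𝓝 0) := by
  have horbit : ∀ m, Tendsto (fun n ↦ birkhoffAverage 𝕜 f g n (f^[m] x) -
      birkhoffAverage 𝕜 f g n x) atTop (𝓝 0) := by
    intro m
    induction m with
    | zero => simp
    | succ m ih =>
      simpa [Function.iterate_succ_apply'] using
        (tendsto_birkhoffAverage_apply_sub_birkhoffAverage' 𝕜 hg f (f^[m] x)).add ih
  have hequi : EquicontinuousAt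
      (fun n y ↦ birkhoffAverage 𝕜 f g n y - birkhoffAverage 𝕜 f g n x) y := by
    simpa only [Metric.equicontinuousAt_iff_right, dist_sub_right] using hF y
  exact hequi.tendsto_of_mem_closure (f := fun _ ↦ 0) tendsto_const_nhds
    (forall_mem_range.2 horbit) (hx y)

end BirkhoffAverage

theorem birkhoffAverage_add_right_self {M R E : Type*} [AddMonoid M] [DivisionSemiring R]
    [AddCommMonoid E] [Module R E] (θ : M) (g : M → E) (n : ℕ) :
    birkhoffAverage R (· + θ) g n θ = (n : R)⁻¹ • ∑ ℓ ∈ Finset.Icc 1 n, g (ℓ • θ) := by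
  simp only [birkhoffAverage, birkhoffSum, add_right_iterate_apply, ← succ_nsmul',
    Finset.range_eq_Ico, Finset.sum_Ico_add' (fun ℓ ↦ g (ℓ • θ)),
    Finset.Ico_add_one_right_eq_Icc, zero_add]

section Translation

variable {H E : Type*} [NormedAddCommGroup E] [NormedSpace ℝ E]

theorem integral_birkhoffAverage_add_right [AddGroup H] [MeasurableSpace H] [MeasurableAdd H]
    (μ : Measure H) [μ.IsAddRightInvariant] (θ : H) {g : H → E} (hg : Integrable g μ) {n : ℕ}
    (hn : n ≠ 0) : ∫ y, birkhoffAverage ℝ (· + θ) g n y ∂μ = ∫ y, g y ∂μ := by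
  simp only [birkhoffAverage, birkhoffSum, add_right_iterate_apply]
  rw [integral_smul, integral_finsetSum _ fun k _ ↦ hg.comp_add_right _]
  simp [integral_add_right_eq_self, ← Nat.cast_smul_eq_nsmul ℝ, smul_smul, hn]

theorem tendsto_birkhoffAverage_add_right_of_denseRange [AddCommGroup H] [TopologicalSpace H]
    [IsTopologicalAddGroup H] [CompactSpace H] [MeasurableSpace H] [BorelSpace H]
    [CompleteSpace E] (μ : Measure H) [IsProbabilityMeasure μ] [μ.IsAddRightInvariant] {θ x : H}
    (hx : DenseRange fun m : ℕ ↦ x + m • θ) {g : H → E} (hg : Continuous g) :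
    Tendsto (fun n ↦ birkhoffAverage ℝ (· + θ) g n x) atTop (𝓝 (∫ y, g y ∂μ)) := by
  let := IsTopologicalAddGroup.rightUniformSpace H
  have := isUniformAddGroup_of_addCommGroup (G := H)
  set A := birkhoffAverage ℝ (· + θ) g
  have hequi : Equicontinuous A := (uniformEquicontinuous_birkhoffAverage_add_right ℝ
    (CompactSpace.uniformContinuous_of_continuous hg) θ).equicontinuous
  have hbdd : IsBounded (range g) := (isCompact_range hg).isBounded
  have hpt := tendsto_birkhoffAverage_sub_of_denseRange ℝ hequi hbdd
    (by simpa only [add_right_iterate_apply] using hx)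
  have hintegrable : ∀ n, Integrable (A n) μ := fun n ↦
    (hequi.continuous n).integrable_of_hasCompactSupport (.of_compactSpace _)
  have hdiff : Tendsto (fun n ↦ ∫ y, A n y - A n x ∂μ) atTop (𝓝 0) := by
    simpa using tendsto_integral_of_dominated_convergence (F := fun n y ↦ A n y - A n x)
      (fun _ ↦ Metric.diam (range g))
      (fun n ↦ ((hintegrable n).sub (integrable_const _)).aestronglyMeasurable) (integrable_const _)
      (fun n ↦ .of_forall fun y ↦ by
        rw [← dist_eq_norm]
        exact dist_birkhoffAverage_birkhoffAverage_le_of_forall_dist_le ℝ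
          (fun k ↦ Metric.dist_le_diam_of_mem hbdd (mem_range_self _) (mem_range_self _)) n)
      (.of_forall hpt)
  have hintegral_eq : ∀ᶠ n in atTop, ∫ y, A n y - A n x ∂μ = ∫ y, g y ∂μ - A n x := by
    filter_upwards [eventually_ne_atTop 0] with n hn
    rw [integral_sub (hintegrable n) (integrable_const _), integral_birkhoffAverage_add_right μ θ
      (hg.integrable_of_hasCompactSupport (.of_compactSpace _)) hn, integral_const, probReal_univ,
      one_smul]
  simpa using (tendsto_const_nhds (x := ∫ y, g y ∂μ)).sub (hdiff.congr' hintegral_eq)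

end Translation

theorem semiorbit_uniformly_distributed_general {G : Type*} [AddCommGroup G] [TopologicalSpace G]
    [IsTopologicalAddGroup G] [CompactSpace G] [MeasurableSpace G] [BorelSpace G]
    (θ : G) (Γ : AddSubgroup G)
    (hΓ : (Γ : Set G) = closure {x : G | ∃ k : ℕ, 1 ≤ k ∧ x = k • θ})
    (μ : Measure Γ) [IsProbabilityMeasure μ]
    (hμ : ∀ g : Γ, ∀ s : Set Γ, MeasurableSet s → μ ((fun x => x + g) ⁻¹' s) = μ s)
    (f : G → ℝ) (hf : Continuous f) :
    Filter.Tendsto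
      (fun k : ℕ => (1 / (k : ℝ)) * ∑ ℓ ∈ Finset.Icc 1 k, f (ℓ • θ))
      Filter.atTop (nhds (∫ x : Γ, f (x : G) ∂μ)) := by
  have : CompactSpace Γ :=
    isCompact_iff_compactSpace.mp (hΓ ▸ isClosed_closure : IsClosed (Γ : Set G)).isCompact
  have : μ.IsAddRightInvariant := ⟨fun g ↦ Measure.ext fun s hs ↦ by
    rw [Measure.map_apply (measurable_add_const g) hs, hμ g s hs]⟩
  let θ' : Γ := ⟨θ, (Set.ext_iff.1 hΓ θ).2 (subset_closure ⟨1, le_rfl, (one_nsmul θ).symm⟩)⟩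
  have hdense : DenseRange fun m : ℕ ↦ θ' + m • θ' := by
    refine Topology.IsInducing.subtypeVal.dense_iff.2 fun x ↦ ?_
    refine closure_mono ?_ ((Set.ext_iff.1 hΓ x).1 x.2)
    rintro _ ⟨k, hk, rfl⟩
    obtain ⟨m, rfl⟩ := Nat.exists_eq_add_of_le' hk
    exact ⟨θ' + m • θ', mem_range_self m, by simp [θ', succ_nsmul']⟩
  refine .congr (fun k ↦ ?_) <|
    tendsto_birkhoffAverage_add_right_of_denseRange μ hdense (hf.comp continuous_subtype_val)
  rw [birkhoffAverage_add_right_self, smul_eq_mul, one_div]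
  rfl

/-- In a compact metrizable Hausdorff topological abelian group `G`, the positive
semi-orbit `{k • θ : k ≥ 1}` of an element `θ` is uniformly distributed in the compact
subgroup `Γ` obtained as its topological closure: for every continuous `f : G → ℝ`, the
Birkhoff averages `(1/k) ∑_{ℓ=1}^k f (ℓ • θ)` converge to the integral of `f` over `Γ`
with respect to the Haar probability measure `μ` of `Γ`. -/
theorem semiorbit_uniformly_distributed {G : Type*} [AddCommGroup G] [TopologicalSpace G]
    [IsTopologicalAddGroup G] [CompactSpace G] [T2Space G]
    [TopologicalSpace.MetrizableSpace G] [MeasurableSpace G] [BorelSpace G]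
    (θ : G) (Γ : AddSubgroup G)
    (hΓ : (Γ : Set G) = closure {x : G | ∃ k : ℕ, 1 ≤ k ∧ x = k • θ})
    (μ : Measure Γ) [IsProbabilityMeasure μ]
    (hμ : ∀ g : Γ, ∀ s : Set Γ, MeasurableSet s → μ ((fun x => x + g) ⁻¹' s) = μ s)
    (f : G → ℝ) (hf : Continuous f) :
    Filter.Tendsto
      (fun k : ℕ => (1 / (k : ℝ)) * ∑ ℓ ∈ Finset.Icc 1 k, f (ℓ • θ))
      Filter.atTop (nhds (∫ x : Γ, f (x : G) ∂μ)) :=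
  semiorbit_uniformly_distributed_general θ Γ hΓ μ hμ f hf
end

section
/- Let G be a compact metrizable topological abelian additive group equipped with a compatible metric, let θ ∈ G and let ε > 0. Then the lower asymptotic density of return times of the orbit of θ to the ε-neighborhood of 0 is positive: liminf_{k→∞} (1/k)·|{ℓ ∈ ℕ : 1 ≤ ℓ ≤ k and dist(ℓ • θ, 0) < ε}| > 0. -/
open scoped Classical in
/-- In a compact metric topological abelian group, for every `θ` and every `ε > 0`, the
lower asymptotic density of the return times `ℓ` with `dist (ℓ • θ, 0) < ε` is positive. -/
theorem return_times_positive_lower_density {G : Type*} [AddCommGroup G] [MetricSpace G]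
    [CompactSpace G] [IsTopologicalAddGroup G] (θ : G) (ε : ℝ) (hε : 0 < ε) :
    0 < Filter.liminf
        (fun k : ℕ =>
          (((Finset.Icc 1 k).filter fun ℓ : ℕ => dist (ℓ • θ) 0 < ε).card : ℝ) / k)
        Filter.atTop := by
  obtain ⟨V, hV, hVsub⟩ := exists_nhds_half_neg (Metric.ball_mem_nhds (0:G) hε)
  obtain ⟨W, hWV, hWopen, hW0⟩ := mem_nhds_iff.mp hV
  obtain ⟨t, ht⟩ := isCompact_univ.elim_finite_subcover (fun x : G => (fun y => y - x) ⁻¹' W)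
    (fun x => hWopen.preimage (continuous_sub_right x))
    (fun y _ => Set.mem_iUnion.2 ⟨y, by simpa using hW0⟩)
  have hc : ∀ g : G, ∃ x ∈ t, g - x ∈ W := fun g => by
    simpa using Set.mem_iUnion₂.mp (ht (Set.mem_univ g))
  choose c hct hcW using hc
  have htne : t.Nonempty := ⟨c 0, hct 0⟩
  set N := t.card with hNdef
  have hN : 0 < N := Finset.card_pos.2 htne
  have key : ∀ k : ℕ,
      k / N - 1 ≤ ((Finset.Icc 1 k).filter fun ℓ : ℕ => dist (ℓ • θ) 0 < ε).card := by
    intro k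
    set n := k / N with hn
    obtain ⟨y, hy, hny⟩ := Finset.exists_le_card_fiber_of_mul_le_card_of_maps_to
      (f := fun ℓ : ℕ => c (ℓ • θ)) (s := Finset.Icc 1 k) (t := t) (n := n)
      (fun ℓ _ => hct _) htne (by
        rw [Nat.card_Icc]
        simpa using (mul_comm N n ▸ (hn ▸ Nat.div_mul_le_self k N)))
    set S := Finset.filter (fun ℓ : ℕ => c (ℓ • θ) = y) (Finset.Icc 1 k) with hS
    by_cases hn1 : n ≤ 1
    · have : n - 1 = 0 := by omega
      simp [this]
    · push_neg at hn1
      have hSne : S.Nonempty := Finset.card_pos.mp (by omega)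
      set m := S.min' hSne with hm
      have hmS : m ∈ S := S.min'_mem hSne
      have hmIcc : m ∈ Finset.Icc 1 k := Finset.mem_of_mem_filter _ hmS
      have hmy : c (m • θ) = y := (Finset.mem_filter.mp hmS).2
      have hmaps : ∀ ℓ ∈ S.erase m,
          ℓ - m ∈ (Finset.Icc 1 k).filter fun ℓ : ℕ => dist (ℓ • θ) 0 < ε := by
        intro ℓ hℓ
        have hℓS := Finset.mem_of_mem_erase hℓ
        have hℓm : ℓ ≠ m := Finset.ne_of_mem_erase hℓ
        have hmle : m ≤ ℓ := S.min'_le ℓ hℓS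
        have hmlt : m < ℓ := lt_of_le_of_ne hmle (Ne.symm hℓm)
        have hℓIcc : ℓ ∈ Finset.Icc 1 k := Finset.mem_of_mem_filter _ hℓS
        have hℓy : c (ℓ • θ) = y := (Finset.mem_filter.mp hℓS).2
        rw [Finset.mem_Icc] at hℓIcc hmIcc
        have hW1 : ℓ • θ - y ∈ V := hWV (by rw [← hℓy]; exact hcW (ℓ • θ))
        have hW2 : m • θ - y ∈ V := hWV (by rw [← hmy]; exact hcW (m • θ))
        have hball := hVsub _ hW1 _ hW2
        have heq : (ℓ • θ - y) - (m • θ - y) = (ℓ - m) • θ := by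
          rw [sub_nsmul θ hmle]
          abel
        rw [heq, Metric.mem_ball] at hball
        rw [Finset.mem_filter, Finset.mem_Icc]
        exact ⟨⟨by omega, by omega⟩, hball⟩
      have hinj : Set.InjOn (fun ℓ => ℓ - m) (S.erase m) := by
        intro a ha b hb hab
        have h1 : m ≤ a := S.min'_le a (Finset.mem_of_mem_erase ha)
        have h2 : m ≤ b := S.min'_le b (Finset.mem_of_mem_erase hb)
        simp only at hab
        omega
      have hcard := Finset.card_le_card_of_injOn _ hmaps hinj
      rw [Finset.card_erase_of_mem hmS] at hcard
      omega
  -- analytic part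
  have hN' : (0:ℝ) < N := by exact_mod_cast hN
  have hbound : ∀ᶠ k : ℕ in Filter.atTop, 1/(2*(N:ℝ)) ≤
      (((Finset.Icc 1 k).filter fun ℓ : ℕ => dist (ℓ • θ) 0 < ε).card : ℝ) / k := by
    filter_upwards [Filter.eventually_ge_atTop (4*N)] with k hk
    have hkpos : 0 < k := by omega
    have hkpos' : (0:ℝ) < k := by exact_mod_cast hkpos
    set C := ((Finset.Icc 1 k).filter fun ℓ : ℕ => dist (ℓ • θ) 0 < ε).card with hC
    have h1 : k / N - 1 ≤ C := key k
    have h2 : (k:ℝ) < N * (k / N : ℕ) + N := by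
      have h2a := Nat.div_add_mod k N
      have h2b := Nat.mod_lt k hN
      have : k < N * (k / N) + N := by omega
      exact_mod_cast this
    have h3 : (k:ℝ)/N - 1 < ((k/N : ℕ) : ℝ) := by
      rw [sub_lt_iff_lt_add, div_lt_iff₀ hN']
      nlinarith
    have h4 : ((k/N : ℕ) : ℝ) - 1 ≤ (C : ℝ) := by
      have : ((k/N - 1 : ℕ) : ℝ) ≤ (C:ℝ) := by exact_mod_cast h1
      have h5 : ((k/N : ℕ) : ℝ) - 1 ≤ ((k/N - 1 : ℕ) : ℝ) := by
        rcases Nat.eq_zero_or_pos (k/N) with h | h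
        · simp [h]
        · push_cast [Nat.cast_sub h]
          linarith
      linarith
    have hkN : (4:ℝ) * N ≤ k := by exact_mod_cast hk
    have h8 : (k:ℝ)/N - 2 ≤ (C:ℝ) := by linarith
    have h6 : (k:ℝ) - 2*N ≤ N * C := by
      have h9 : ((k:ℝ)/N - 2) * N ≤ (C:ℝ) * N :=
        mul_le_mul_of_nonneg_right h8 (le_of_lt hN')
      have h10 : ((k:ℝ)/N) * N = (k:ℝ) := div_mul_cancel₀ _ (ne_of_gt hN')
      nlinarith
    rw [div_le_div_iff₀ (by positivity) hkpos']
    linarith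
  have hcobdd : Filter.IsCoboundedUnder (· ≥ ·) Filter.atTop
      (fun k : ℕ =>
        (((Finset.Icc 1 k).filter fun ℓ : ℕ => dist (ℓ • θ) 0 < ε).card : ℝ) / k) := by
    refine Filter.isCoboundedUnder_ge_of_le Filter.atTop (x := 1) ?_
    intro k
    rcases Nat.eq_zero_or_pos k with h | h
    · simp [h]
    · have hcard : (((Finset.Icc 1 k).filter fun ℓ : ℕ => dist (ℓ • θ) 0 < ε).card : ℝ) ≤ k := by
        have := Finset.card_filter_le (Finset.Icc 1 k) (fun ℓ : ℕ => dist (ℓ • θ) 0 < ε)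
        rw [Nat.card_Icc] at this
        exact_mod_cast le_trans this (by omega)
      rw [div_le_one (by exact_mod_cast h)]
      exact hcard
  have hpos : (0:ℝ) < 1/(2*(N:ℝ)) := by positivity
  exact lt_of_lt_of_le hpos (Filter.le_liminf_of_le hcobdd hbound)
end

section
/- For every θ in the m-dimensional torus 𝕋^m = (Fin m → AddCircle (1:ℝ)) with its product (sup) metric, there exist a constant C > 0 and a natural number d ≤ m, depending only on θ, such that for every ε with 0 < ε ≤ 1: liminf_{k→∞} (1/k)·|{ℓ ∈ ℕ : 1 ≤ ℓ ≤ k and dist(ℓ • θ, 0) < ε}| ≥ C·ε^d. -/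
open Filter Finset

lemma norm_addCircle_coe_le (x : ℝ) : ‖(x : AddCircle (1 : ℝ))‖ ≤ |x| := by
  rw [AddCircle.norm_eq]
  have h := round_le x 0
  simpa using h

open scoped Classical in
/-- For every `θ` in the torus `𝕋^m = (Fin m → AddCircle 1)` with its product sup metric,
there are `C > 0` and `d ≤ m` (depending only on `θ`) such that for all `0 < ε ≤ 1` the
lower asymptotic density of the return times `ℓ` with `dist (ℓ • θ, 0) < ε` is at least
`C ε^d`. -/
theorem return_times_density_lower_bound (m : ℕ) (θ : Fin m → AddCircle (1 : ℝ)) :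
    ∃ (C : ℝ) (d : ℕ), 0 < C ∧ d ≤ m ∧
      ∀ ε : ℝ, 0 < ε → ε ≤ 1 →
        C * ε ^ d ≤
          Filter.liminf
            (fun k : ℕ =>
              (((Finset.Icc 1 k).filter fun ℓ : ℕ => dist (ℓ • θ) 0 < ε).card : ℝ) / k)
            Filter.atTop := by
  refine ⟨(1/2) ^ m, m, by positivity, le_rfl, ?_⟩
  intro ε hε hε1
  haveI : Fact ((0:ℝ) < 1) := ⟨zero_lt_one⟩
  set n : ℕ := ⌈1/ε⌉₊ with hn
  have hn1 : 1 ≤ n := Nat.one_le_ceil_iff.mpr (by positivity)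
  have hnpos : (0:ℝ) < n := by exact_mod_cast hn1
  have hle : 1/ε ≤ (n:ℝ) := Nat.le_ceil _
  have hinv : 1/(n:ℝ) ≤ ε := by
    rw [div_le_iff₀ hnpos]
    rw [div_le_iff₀ hε] at hle
    nlinarith
  have hεinv1 : (1:ℝ) ≤ 1/ε := by rw [le_div_iff₀ hε]; linarith
  have hn2 : (n:ℝ) ≤ 2/ε := by
    have h1 : (n:ℝ) < 1/ε + 1 := Nat.ceil_lt_add_one (by positivity)
    have : (1:ℝ)/ε + 1 ≤ 2/ε := by
      rw [div_add' _ _ _ hε.ne', div_le_div_iff₀ hε hε]; nlinarith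
    linarith
  -- representative in [0,1)
  set r : AddCircle (1:ℝ) → ℝ := fun x => ((AddCircle.equivIco 1 0 x : Set.Ico (0:ℝ) (0+1)) : ℝ)
    with hr
  have hr_mem : ∀ x, r x ∈ Set.Ico (0:ℝ) 1 := fun x => by
    simpa using (AddCircle.equivIco 1 0 x).2
  have hr_coe : ∀ x, ((r x : ℝ) : AddCircle (1:ℝ)) = x := fun x =>
    (AddCircle.equivIco 1 0).symm_apply_apply x
  -- the box map
  have hbox : ∀ x : AddCircle (1:ℝ), ⌊(n:ℝ) * r x⌋₊ < n := by
    intro x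
    rw [Nat.floor_lt (by nlinarith [(hr_mem x).1])]
    nlinarith [(hr_mem x).2, (hr_mem x).1]
  set φ : ℕ → (Fin m → Fin n) := fun j i => ⟨⌊(n:ℝ) * r ((j • θ) i)⌋₊, hbox _⟩ with hφ
  -- same box gives small distance on the circle
  have hsame : ∀ x y : AddCircle (1:ℝ), ⌊(n:ℝ) * r x⌋₊ = ⌊(n:ℝ) * r y⌋₊ → dist x y < 1/n := by
    intro x y hxy
    have hx0 : (0:ℝ) ≤ (n:ℝ) * r x := by nlinarith [(hr_mem x).1]
    have hy0 : (0:ℝ) ≤ (n:ℝ) * r y := by nlinarith [(hr_mem y).1]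
    have h1 : (n:ℝ) * r x < ⌊(n:ℝ) * r x⌋₊ + 1 := Nat.lt_floor_add_one _
    have h2 : (n:ℝ) * r y < ⌊(n:ℝ) * r y⌋₊ + 1 := Nat.lt_floor_add_one _
    have h3 : (⌊(n:ℝ) * r x⌋₊ : ℝ) ≤ (n:ℝ) * r x := Nat.floor_le hx0
    have h4 : (⌊(n:ℝ) * r y⌋₊ : ℝ) ≤ (n:ℝ) * r y := Nat.floor_le hy0
    have hc : ((⌊(n:ℝ) * r x⌋₊ : ℝ)) = ((⌊(n:ℝ) * r y⌋₊ : ℝ)) := by exact_mod_cast hxy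
    have habs : |r x - r y| < 1/n := by
      rw [abs_sub_lt_iff]
      constructor <;> rw [lt_div_iff₀ hnpos] <;> nlinarith
    calc dist x y = ‖x - y‖ := dist_eq_norm x y
      _ = ‖((r x - r y : ℝ) : AddCircle (1:ℝ))‖ := by
            have hxy2 : ((r x - r y : ℝ) : AddCircle (1:ℝ)) = x - y := by
              rw [sub_eq_add_neg, sub_eq_add_neg, QuotientAddGroup.mk_add,
                QuotientAddGroup.mk_neg, hr_coe x, hr_coe y]
            rw [hxy2]
      _ ≤ |r x - r y| := norm_addCircle_coe_le _
      _ < 1/n := habs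
  -- the key counting bound
  have key : ∀ k : ℕ, 1 ≤ k →
      (k : ℝ) / (n ^ m : ℕ) - 1 ≤
        (((Finset.Icc 1 k).filter fun ℓ : ℕ => dist (ℓ • θ) 0 < ε).card : ℝ) := by
    intro k hk
    have hcardIcc : (Finset.Icc 1 k).card = k := by simp
    have hBpos : (0:ℝ) < (n ^ m : ℕ) := by positivity
    -- pigeonhole
    have hsum : ∑ y : Fin m → Fin n, (((Finset.Icc 1 k).filter fun j => φ j = y).card : ℝ)
        = (k : ℝ) := by
      rw [← Nat.cast_sum]
      norm_cast
      rw [← Finset.card_eq_sum_card_fiberwise (f := φ) (t := Finset.univ)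
        (fun x _ => Finset.mem_univ _)]
      exact hcardIcc
    have hBcard : (Finset.univ : Finset (Fin m → Fin n)).card = n ^ m := by
      simp [Finset.card_univ]
    have hsums : ∑ _y : Fin m → Fin n, (k : ℝ) / (n ^ m : ℕ)
        ≤ ∑ y : Fin m → Fin n, (((Finset.Icc 1 k).filter fun j => φ j = y).card : ℝ) := by
      rw [hsum, Finset.sum_const, hBcard, nsmul_eq_mul]
      rw [mul_div_cancel₀ _ hBpos.ne']
    obtain ⟨y, -, hy⟩ := Finset.exists_le_of_sum_le (s := (Finset.univ : Finset (Fin m → Fin n)))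
      (f := fun _ => (k : ℝ) / (n ^ m : ℕ))
      (g := fun y => (((Finset.Icc 1 k).filter fun j => φ j = y).card : ℝ))
      ⟨fun _ => ⟨0, hn1⟩, Finset.mem_univ _⟩ hsums
    set S := (Finset.Icc 1 k).filter fun j => φ j = y with hS
    have hSpos : 0 < (S.card : ℝ) := lt_of_lt_of_le (by positivity) hy
    have hSne : S.Nonempty := Finset.card_pos.mp (by exact_mod_cast hSpos)
    set j₀ := S.min' hSne with hj₀
    have hj₀S : j₀ ∈ S := S.min'_mem hSne
    have hj₀Icc := (Finset.mem_filter.mp hj₀S).1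
    have hj₀y : φ j₀ = y := (Finset.mem_filter.mp hj₀S).2
    -- injection from S.erase j₀ into the return set
    have hinj : (S.erase j₀).card ≤
        ((Finset.Icc 1 k).filter fun ℓ : ℕ => dist (ℓ • θ) 0 < ε).card := by
      apply Finset.card_le_card_of_injOn (fun j => j - j₀)
      · intro j hj
        have hjS : j ∈ S := Finset.mem_of_mem_erase hj
        have hjne : j ≠ j₀ := Finset.ne_of_mem_erase hj
        have hjIcc := (Finset.mem_filter.mp hjS).1
        have hjy : φ j = y := (Finset.mem_filter.mp hjS).2
        have hj₀le : j₀ ≤ j := S.min'_le j hjS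
        have hj₀lt : j₀ < j := lt_of_le_of_ne hj₀le (Ne.symm hjne)
        rw [Finset.mem_Icc] at hjIcc hj₀Icc
        refine Finset.mem_filter.mpr ⟨Finset.mem_Icc.mpr ⟨by show 1 ≤ j - j₀; omega, by show j - j₀ ≤ k; omega⟩, ?_⟩
        have hsub : (j - j₀) • θ = j • θ - j₀ • θ := by
          rw [sub_nsmul θ hj₀le]; abel
        rw [hsub, dist_eq_norm, sub_zero, ← dist_eq_norm]
        rw [dist_pi_lt_iff hε]
        intro i
        have hcoord : ⌊(n:ℝ) * r ((j • θ) i)⌋₊ = ⌊(n:ℝ) * r ((j₀ • θ) i)⌋₊ := by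
          have := congrFun (hjy.trans hj₀y.symm) i
          simpa [hφ, Fin.ext_iff] using this
        exact lt_of_lt_of_le (hsame _ _ hcoord) hinv
      · intro a ha b hb hab
        have haS : a ∈ S := Finset.mem_of_mem_erase ha
        have hbS : b ∈ S := Finset.mem_of_mem_erase hb
        have h1 : j₀ ≤ a := S.min'_le a haS
        have h2 : j₀ ≤ b := S.min'_le b hbS
        simp only at hab
        omega
    have hcard : (S.erase j₀).card = S.card - 1 := Finset.card_erase_of_mem hj₀S
    have h1 : (1:ℝ) ≤ (S.card : ℝ) := by exact_mod_cast Finset.card_pos.mpr hSne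
    have : ((S.erase j₀).card : ℝ) = (S.card : ℝ) - 1 := by
      rw [hcard]; push_cast [Nat.cast_sub (Finset.card_pos.mpr hSne)]; ring
    calc (k : ℝ) / (n ^ m : ℕ) - 1 ≤ (S.card : ℝ) - 1 := by linarith
      _ = ((S.erase j₀).card : ℝ) := this.symm
      _ ≤ _ := by exact_mod_cast hinj
  -- pass to the liminf
  set B : ℝ := ((n ^ m : ℕ) : ℝ) with hB
  have hBpos : (0:ℝ) < B := by positivity
  have hlim : Tendsto (fun k : ℕ => 1/B - 1/(k:ℝ)) atTop (nhds (1/B)) := by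
    have := tendsto_const_nhds (x := 1/B) (f := atTop (α := ℕ))
    simpa using this.sub tendsto_one_div_atTop_nhds_zero_nat
  have hliminf_g : Filter.liminf (fun k : ℕ => 1/B - 1/(k:ℝ)) atTop = 1/B := hlim.liminf_eq
  have hcompare : Filter.liminf (fun k : ℕ => 1/B - 1/(k:ℝ)) atTop ≤
      Filter.liminf
        (fun k : ℕ =>
          (((Finset.Icc 1 k).filter fun ℓ : ℕ => dist (ℓ • θ) 0 < ε).card : ℝ) / k)
        Filter.atTop := by
    refine Filter.liminf_le_liminf ?_ ?_ ?_
    · filter_upwards [eventually_ge_atTop 1] with k hk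
      have hkpos : (0:ℝ) < (k:ℝ) := by exact_mod_cast hk
      have hkey := key k hk
      have heq : (1/B - 1/(k:ℝ)) = ((k:ℝ)/B - 1)/k := by field_simp
      rw [heq]
      gcongr
    · refine isBoundedUnder_of ⟨1/B - 1, fun k => ?_⟩
      simp only [ge_iff_le]
      have : 1/(k:ℝ) ≤ 1 := by
        rcases Nat.eq_zero_or_pos k with h | h
        · simp [h]
        · rw [div_le_one (by exact_mod_cast h)]; exact_mod_cast h
      linarith
    · apply Filter.isCoboundedUnder_ge_of_le (l := (atTop : Filter ℕ)) (x := 1)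
      intro k
      rcases Nat.eq_zero_or_pos k with h | h
      · simp [h]
      · have hkpos : (0:ℝ) < (k:ℝ) := by exact_mod_cast h
        rw [div_le_one hkpos]
        have : ((Finset.Icc 1 k).filter fun ℓ : ℕ => dist (ℓ • θ) 0 < ε).card ≤ k := by
          calc _ ≤ (Finset.Icc 1 k).card := Finset.card_filter_le _ _
            _ = k := by simp
        exact_mod_cast this
  have hfinal : (1/2:ℝ) ^ m * ε ^ m ≤ 1/B := by
    have h1 : (1/2:ℝ) * ε ≤ 1/(n:ℝ) := by
      rw [le_div_iff₀ hnpos]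
      have h2 := (le_div_iff₀ hε).mp hn2
      nlinarith
    have : ((1/2:ℝ) * ε) ^ m ≤ (1/(n:ℝ)) ^ m :=
      pow_le_pow_left₀ (by positivity) h1 m
    calc (1/2:ℝ) ^ m * ε ^ m = ((1/2:ℝ) * ε) ^ m := by rw [mul_pow]
      _ ≤ (1/(n:ℝ)) ^ m := this
      _ = 1/B := by rw [hB]; push_cast; rw [one_div, one_div, inv_pow]
  linarith [hcompare, hfinal]
end

section
/- Let λ > 0, let r ∈ ℕ, let a : Fin (r+1) → AddCircle λ be a family of points on the circle ℝ/λℤ, let ã : Fin (r+1) → ℝ be a family of real numbers, and let ε > 0, C > 0 and η > 0. Then for every K ∈ ℕ there exists a natural number k ≥ K such that: (i) dist(k • a_i, 0) < ε for every i; (ii) for every i, either ã_i = ã_0 or k·|ã_i − ã_0| > C; and (iii) k > C/η. -/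
/-!
Pigeonhole in the compact torus `(ℝ/λℤ)^(r+1)`: among the multiples `n • (N • a)` two are
`ε`-close, so their difference `m • (N • a)` with `m ≥ 1` is `ε`-close to `0`,
and `k = m * N ≥ N`.
Conditions (ii) and (iii) hold for all large `k`, so they are compatible with such recurrence times.
-/

open Filter

theorem exists_lt_dist_lt_of_compactSpace {α : Type*} [PseudoMetricSpace α] [CompactSpace α]
    (u : ℕ → α) {ε : ℝ} (hε : 0 < ε) : ∃ m n, m < n ∧ dist (u n) (u m) < ε := by
  obtain ⟨t, -, ht, hcover⟩ :=
    Metric.finite_approx_of_totallyBounded (isCompact_univ (X := α)).totallyBounded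
      (ε / 2) (half_pos hε)
  have hcenter : ∀ n, ∃ y ∈ t, u n ∈ Metric.ball y (ε / 2) := fun n => by
    simpa using hcover (Set.mem_univ (u n))
  choose c hct hc using hcenter
  obtain ⟨m, n, hmn, hcmn⟩ := ht.exists_lt_map_eq_of_forall_mem hct
  refine ⟨m, n, hmn, ?_⟩
  calc dist (u n) (u m) ≤ dist (u n) (c n) + dist (u m) (c m) := by
        rw [hcmn]; exact dist_triangle_right _ _ _
    _ < ε / 2 + ε / 2 := add_lt_add (hc n) (hc m)
    _ = ε := add_halves ε

section Recurrence

variable {E : Type*} [SeminormedAddCommGroup E] [CompactSpace E]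

theorem exists_pos_norm_nsmul_lt (x : E) {ε : ℝ} (hε : 0 < ε) :
    ∃ m : ℕ, 0 < m ∧ ‖m • x‖ < ε := by
  obtain ⟨m, n, hmn, hdist⟩ := exists_lt_dist_lt_of_compactSpace (· • x) hε
  refine ⟨n - m, Nat.sub_pos_of_lt hmn, ?_⟩
  rwa [sub_nsmul x hmn.le, ← sub_eq_add_neg, ← dist_eq_norm]

theorem frequently_norm_nsmul_lt (x : E) {ε : ℝ} (hε : 0 < ε) :
    ∃ᶠ k : ℕ in atTop, ‖k • x‖ < ε := by
  refine frequently_atTop.2 fun N => ?_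
  obtain ⟨m, hm, hmx⟩ := exists_pos_norm_nsmul_lt (N • x) hε
  exact ⟨m * N, Nat.le_mul_of_pos_left N hm, by rwa [mul_nsmul']⟩

end Recurrence

theorem eventually_eq_or_lt_natCast_mul_abs_sub (C a b : ℝ) :
    ∀ᶠ k : ℕ in atTop, a = b ∨ C < k * |a - b| := by
  rcases eq_or_ne a b with hab | hab
  · exact .of_forall fun _ => .inl hab
  · have hpos : 0 < |a - b| := abs_pos.2 (sub_ne_zero.2 hab)
    exact ((tendsto_natCast_atTop_atTop.atTop_mul_const hpos).eventually_gt_atTop C).mono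
      fun _ => .inr

theorem exists_large_iterate_recurrence_general (lam : ℝ) (hlam : 0 < lam) (r : ℕ)
    (a : Fin (r + 1) → AddCircle lam) (atilde : Fin (r + 1) → ℝ)
    (ε C η : ℝ) (hε : 0 < ε) :
    ∀ K : ℕ, ∃ k : ℕ, K ≤ k ∧
      (∀ i : Fin (r + 1), dist (k • a i) 0 < ε) ∧
      (∀ i : Fin (r + 1), atilde i = atilde 0 ∨ C < (k : ℝ) * |atilde i - atilde 0|) ∧
      C / η < (k : ℝ) := by
  have : Fact (0 < lam) := ⟨hlam⟩
  have hsep : ∀ᶠ k : ℕ in atTop,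
      ∀ i, atilde i = atilde 0 ∨ C < (k : ℝ) * |atilde i - atilde 0| :=
    eventually_all.2 fun i => eventually_eq_or_lt_natCast_mul_abs_sub C (atilde i) (atilde 0)
  have hlarge : ∀ᶠ k : ℕ in atTop, C / η < (k : ℝ) :=
    tendsto_natCast_atTop_atTop.eventually_gt_atTop _
  refine frequently_atTop.1 (((frequently_norm_nsmul_lt a hε).and_eventually
    (hsep.and hlarge)).mono fun k ⟨hk, hsep_k, hlarge_k⟩ => ⟨fun i => ?_, hsep_k, hlarge_k⟩)
  rw [dist_zero_right]
  exact (norm_le_pi_norm (k • a) i).trans_lt hk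

/-- Simultaneous recurrence on the circle `ℝ/λℤ` together with separation of augmented
actions: given points `a i` on the circle, real numbers `ã i`, and constants
`ε, C, η > 0`, there exist arbitrarily large `k ∈ ℕ` such that `dist (k • a i, 0) < ε`
for all `i`; for each `i` either `ã i = ã 0` or `k * |ã i - ã 0| > C`; and `k > C / η`. -/
theorem exists_large_iterate_recurrence (lam : ℝ) (hlam : 0 < lam) (r : ℕ)
    (a : Fin (r + 1) → AddCircle lam) (atilde : Fin (r + 1) → ℝ)
    (ε C η : ℝ) (hε : 0 < ε) (hC : 0 < C) (hη : 0 < η) :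
    ∀ K : ℕ, ∃ k : ℕ, K ≤ k ∧
      (∀ i : Fin (r + 1), dist (k • a i) 0 < ε) ∧
      (∀ i : Fin (r + 1), atilde i = atilde 0 ∨ C < (k : ℝ) * |atilde i - atilde 0|) ∧
      C / η < (k : ℝ) :=
  exists_large_iterate_recurrence_general lam hlam r a atilde ε C η hε
end

section
/- Let X be a metric space and φ : ℝ × X → X a continuous flow on X (φ(0, x) = x and φ(s + t, x) = φ(s, φ(t, x)) for all s, t ∈ ℝ and x ∈ X). Let K ⊆ X be a compact set invariant under the flow (φ(t, x) ∈ K for all x ∈ K and t ∈ ℝ), and let U be an open set with K ⊆ U, with compact closure, and isolating for K: every point p whose entire orbit {φ(t, p) : t ∈ ℝ} is contained in the closure of U belongs to K. Then there exists T > 1 such that for every p ∈ X and every τ ∈ [0, 1] with φ(τ, p) ∈ (closure U) \ U, there exists t ∈ ℝ with |t| ≤ T and φ(t, p) ∉ closure U. -/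
/-!
Every point of `closure U \ U` lies outside `K`, so by isolation its orbit leaves `closure U`
at some time; leaving `closure U` at a fixed time is an open condition. Since `closure U \ U`
is compact, finitely many such times, hence times bounded by one `T`, suffice for all of its
points. A trajectory meeting `closure U \ U` at time `τ ∈ [0, 1]` then escapes within `T + 1`.
-/

open Set

theorem IsCompact.exists_abs_le_of_subset_iUnion {X : Type*} [TopologicalSpace X] {B : Set X}
    (hB : IsCompact B) (W : ℝ → Set X) (hW : ∀ s, IsOpen (W s)) (hcover : B ⊆ ⋃ s, W s) :
    ∃ T : ℝ, ∀ x ∈ B, ∃ s, |s| ≤ T ∧ x ∈ W s := by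
  let V : ℝ → Set X := fun T => ⋃ s ∈ {s : ℝ | |s| ≤ T}, W s
  have hV_mono : Monotone V := fun T T' hTT' =>
    biUnion_subset_biUnion_left fun s hs => le_trans (α := ℝ) hs hTT'
  have hB_sub : B ⊆ ⋃ T, V T := fun x hx => by
    obtain ⟨s, hs⟩ := mem_iUnion.1 (hcover hx)
    exact mem_iUnion.2 ⟨|s|, mem_biUnion (le_refl |s|) hs⟩
  obtain ⟨T, hT⟩ := hB.elim_directed_cover V (fun T => isOpen_biUnion fun s _ => hW s)
    hB_sub hV_mono.directed_le
  refine ⟨T, fun x hx => ?_⟩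
  obtain ⟨s, hs, hxs⟩ := mem_iUnion₂.1 (hT hx)
  exact ⟨s, hs, hxs⟩

theorem flow_escape_time_general {X : Type*} [MetricSpace X] (φ : ℝ × X → X)
    (hcont : Continuous φ)
    (hadd : ∀ s t : ℝ, ∀ x : X, φ (s + t, x) = φ (s, φ (t, x)))
    (K : Set X)
    (U : Set X) (hU : IsOpen U) (hKU : K ⊆ U) (hUc : IsCompact (closure U))
    (hiso : ∀ p : X, (∀ t : ℝ, φ (t, p) ∈ closure U) → p ∈ K) :
    ∃ T : ℝ, 1 < T ∧
      ∀ p : X, ∀ τ ∈ Set.Icc (0 : ℝ) 1, φ (τ, p) ∈ closure U \ U →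
        ∃ t : ℝ, |t| ≤ T ∧ φ (t, p) ∉ closure U := by
  let W : ℝ → Set X := fun s => {x | φ (s, x) ∉ closure U}
  have hW : ∀ s, IsOpen (W s) := fun s =>
    (isClosed_closure.preimage (hcont.comp (Continuous.prodMk_right s))).isOpen_compl
  have hescape : closure U \ U ⊆ ⋃ s, W s := fun x hx => by
    by_contra hx'
    simp only [W, mem_iUnion, mem_ofPred_eq, not_exists, not_not] at hx'
    exact hx.2 (hKU (hiso x hx'))
  obtain ⟨T, hT⟩ := (hUc.diff hU).exists_abs_le_of_subset_iUnion W hW hescape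
  refine ⟨|T| + 2, by linarith [abs_nonneg T], fun p τ hτ hp => ?_⟩
  obtain ⟨s, hsT, hs⟩ := hT _ hp
  refine ⟨s + τ, ?_, by rw [hadd]; exact hs⟩
  calc |s + τ| ≤ |s| + |τ| := abs_add_le s τ
    _ ≤ |T| + 2 := by
      rw [abs_of_nonneg hτ.1]
      linarith [le_abs_self T, hτ.2]

/-- Uniform escape time for an isolated compact invariant set of a continuous flow: if
`K` is a compact invariant set of the flow `φ` and `U ⊇ K` is an open isolating
neighborhood with compact closure, then there is `T > 1` such that any trajectory
touching `(closure U) \ U` at some time `τ ∈ [0, 1]` leaves `closure U` at some time `t`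
with `|t| ≤ T`. -/
theorem flow_escape_time {X : Type*} [MetricSpace X] (φ : ℝ × X → X)
    (hcont : Continuous φ)
    (h0 : ∀ x : X, φ (0, x) = x)
    (hadd : ∀ s t : ℝ, ∀ x : X, φ (s + t, x) = φ (s, φ (t, x)))
    (K : Set X) (hK : IsCompact K)
    (hKinv : ∀ x ∈ K, ∀ t : ℝ, φ (t, x) ∈ K)
    (U : Set X) (hU : IsOpen U) (hKU : K ⊆ U) (hUc : IsCompact (closure U))
    (hiso : ∀ p : X, (∀ t : ℝ, φ (t, p) ∈ closure U) → p ∈ K) :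
    ∃ T : ℝ, 1 < T ∧
      ∀ p : X, ∀ τ ∈ Set.Icc (0 : ℝ) 1, φ (τ, p) ∈ closure U \ U →
        ∃ t : ℝ, |t| ≤ T ∧ φ (t, p) ∉ closure U :=
  flow_escape_time_general φ hcont hadd K U hU hKU hUc hiso
end

section
/- Let X be a metric space with at least two points and let f : X → X be a continuous map. Suppose that some subsequence of iterates of f converges uniformly to the identity: for every ε > 0 and every N ∈ ℕ there exists k ≥ N such that dist(f^[k](x), x) < ε for all x ∈ X. Then f is not topologically mixing; that is, it is not the case that for every pair of nonempty open sets U, V ⊆ X there exists N ∈ ℕ such that f^[k](U) ∩ V ≠ ∅ for all k ≥ N. -/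
/-! Pick `x ≠ y` and `ε = dist x y / 3`. A map moving every point by less than `ε` cannot carry
any point of `ball x ε` into `ball y ε`, so along the iterates close to the identity the
mixing condition for this pair of balls fails infinitely often. -/

open Metric

theorem disjoint_image_ball_ball_of_dist_lt {X : Type*} [PseudoMetricSpace X] {g : X → X}
    {ε : ℝ} (hg : ∀ z, dist (g z) z < ε) {x y : X} (hxy : 3 * ε ≤ dist x y) :
    Disjoint (g '' ball x ε) (ball y ε) := by
  rw [Set.disjoint_left]
  rintro _ ⟨u, hu, rfl⟩ hgu
  have hxu : dist x u < ε := by rwa [dist_comm]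
  have hugu : dist u (g u) < ε := by rw [dist_comm]; exact hg u
  have hguy : dist (g u) y < ε := hgu
  linarith [dist_triangle4 x u (g u) y]

theorem not_topologically_mixing_of_iterates_converge_to_id_general {X : Type*} [MetricSpace X]
    (hX : ∃ x y : X, x ≠ y) (f : X → X)
    (hconv : ∀ ε : ℝ, 0 < ε → ∀ N : ℕ, ∃ k : ℕ, N ≤ k ∧ ∀ x : X, dist (f^[k] x) x < ε) :
    ¬ (∀ U V : Set X, IsOpen U → IsOpen V → U.Nonempty → V.Nonempty →
        ∃ N : ℕ, ∀ k : ℕ, N ≤ k → (f^[k] '' U ∩ V).Nonempty) := by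
  intro hmix
  obtain ⟨x, y, hxy⟩ := hX
  set ε := dist x y / 3 with hε_def
  have hε : 0 < ε := by have := dist_pos.mpr hxy; positivity
  obtain ⟨N, hN⟩ := hmix (ball x ε) (ball y ε) isOpen_ball isOpen_ball
    ⟨x, mem_ball_self hε⟩ ⟨y, mem_ball_self hε⟩
  obtain ⟨k, hNk, hk⟩ := hconv ε hε N
  have hdisj := disjoint_image_ball_ball_of_dist_lt hk
    (by rw [hε_def, mul_div_cancel₀ _ three_ne_zero])
  exact (hN k hNk).ne_empty hdisj.inter_eq

/-- If a subsequence of the iterates of a continuous self-map `f` of a metric space with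
at least two points converges uniformly to the identity, then `f` is not topologically
mixing. -/
theorem not_topologically_mixing_of_iterates_converge_to_id {X : Type*} [MetricSpace X]
    (hX : ∃ x y : X, x ≠ y) (f : X → X) (hf : Continuous f)
    (hconv : ∀ ε : ℝ, 0 < ε → ∀ N : ℕ, ∃ k : ℕ, N ≤ k ∧ ∀ x : X, dist (f^[k] x) x < ε) :
    ¬ (∀ U V : Set X, IsOpen U → IsOpen V → U.Nonempty → V.Nonempty →
        ∃ N : ℕ, ∀ k : ℕ, N ≤ k → (f^[k] '' U ∩ V).Nonempty) :=
  not_topologically_mixing_of_iterates_converge_to_id_general hX f hconv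
end
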